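/- Let F ⊆ 2^[n] be a set system, let i ∈ [n], and let F₀ = {F ∈ F : i ∉ F} and F₁ = {F \ {i} : F ∈ F, i ∈ F} be the standard subdivision of F with respect to i. Then |Sh(F)| ≥ |Sh(F₀)| + |Sh(F₁)|. -/

import Mathlib

/-!
Every set shattered by `𝓕₀` or by `𝓕₁` avoids `i` and is shattered by `𝓕`. If `S` is shattered
by both, then `𝓕` shatters `insert i S`: a trace containing `i` comes from `𝓕₁`, any other from
`𝓕₀`. These sets `insert i S` are new, hence
`|Sh 𝓕| ≥ |Sh 𝓕₀ ∪ Sh 𝓕₁| + |Sh 𝓕₀ ∩ Sh 𝓕₁| = |Sh 𝓕₀| + |Sh 𝓕₁|`.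
-/

open scoped symmDiff

/-- `𝓕` shatters `S`: every subset of `S` is the trace of some member of `𝓕` on `S`. -/
def Shatters {n : ℕ} (𝓕 : Finset (Finset (Fin n))) (S : Finset (Fin n)) : Prop :=
  ∀ T ⊆ S, ∃ F ∈ 𝓕, F ∩ S = T

/-- `𝓕` strongly shatters `S`: there is `I ⊆ [n] \ S` with `{H ∪ I : H ⊆ S} ⊆ 𝓕`. -/
def StronglyShatters {n : ℕ} (𝓕 : Finset (Finset (Fin n))) (S : Finset (Fin n)) : Prop :=
  ∃ I : Finset (Fin n), I ⊆ Sᶜ ∧ ∀ H ⊆ S, H ∪ I ∈ 𝓕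

open Classical in
/-- The family of subsets of `[n]` shattered by `𝓕`. -/
noncomputable def Sh {n : ℕ} (𝓕 : Finset (Finset (Fin n))) : Finset (Finset (Fin n)) :=
  Finset.univ.filter (Shatters 𝓕)

open Classical in
/-- The family of subsets of `[n]` strongly shattered by `𝓕`. -/
noncomputable def st {n : ℕ} (𝓕 : Finset (Finset (Fin n))) : Finset (Finset (Fin n)) :=
  Finset.univ.filter (StronglyShatters 𝓕)

/-- `𝓕` is shattering-extremal if it shatters exactly `|𝓕|` sets. -/
def Extremal {n : ℕ} (𝓕 : Finset (Finset (Fin n))) : Prop :=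
  (Sh 𝓕).card = 𝓕.card

/-- The Vapnik–Chervonenkis dimension: the maximum cardinality of a shattered set. -/
noncomputable def dimVC {n : ℕ} (𝓕 : Finset (Finset (Fin n))) : ℕ :=
  (Sh 𝓕).sup Finset.card

namespace Finset

variable {α : Type*} [DecidableEq α] {𝒜 : Finset (Finset α)} {s : Finset α} {a : α}

lemma Shatters.notMem_of_forall_notMem (h : ∀ t ∈ 𝒜, a ∉ t) (hs : 𝒜.Shatters s) : a ∉ s := by
  obtain ⟨u, hu, hsu⟩ := hs.exists_superset
  exact notMem_mono hsu (h u hu)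

lemma Shatters.notMem_of_nonMemberSubfamily (hs : (nonMemberSubfamily a 𝒜).Shatters s) :
    a ∉ s :=
  hs.notMem_of_forall_notMem fun _ ht ↦ (mem_nonMemberSubfamily.1 ht).2

lemma Shatters.notMem_of_memberSubfamily (hs : (memberSubfamily a 𝒜).Shatters s) : a ∉ s :=
  hs.notMem_of_forall_notMem fun _ ht ↦ (mem_memberSubfamily.1 ht).2

lemma Shatters.of_nonMemberSubfamily (hs : (nonMemberSubfamily a 𝒜).Shatters s) :
    𝒜.Shatters s :=
  hs.mono_left (filter_subset _ _)

lemma Shatters.of_memberSubfamily (hs : (memberSubfamily a 𝒜).Shatters s) : 𝒜.Shatters s := by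
  intro t ht
  obtain ⟨u, hu, rfl⟩ := hs ht
  exact ⟨insert a u, (mem_memberSubfamily.1 hu).1,
    inter_insert_of_notMem hs.notMem_of_memberSubfamily⟩

lemma Shatters.insert_of_memberSubfamily_of_nonMemberSubfamily
    (h₁ : (memberSubfamily a 𝒜).Shatters s) (h₀ : (nonMemberSubfamily a 𝒜).Shatters s) :
    𝒜.Shatters (insert a s) := by
  intro t ht
  rw [subset_insert_iff] at ht
  by_cases ha : a ∈ t
  · obtain ⟨u, hu, hsu⟩ := h₁ ht
    refine ⟨insert a u, (mem_memberSubfamily.1 hu).1, ?_⟩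
    rw [← insert_inter_distrib, hsu, insert_erase ha]
  · obtain ⟨u, hu, hsu⟩ := h₀ ht
    rw [mem_nonMemberSubfamily] at hu
    refine ⟨u, hu.1, ?_⟩
    rwa [insert_inter_of_notMem hu.2, hsu, erase_eq_self]

lemma card_shatterer_nonMemberSubfamily_add_card_shatterer_memberSubfamily_le
    (a : α) (𝒜 : Finset (Finset α)) :
    #(nonMemberSubfamily a 𝒜).shatterer + #(memberSubfamily a 𝒜).shatterer ≤ #𝒜.shatterer := by
  set 𝒮₀ := (nonMemberSubfamily a 𝒜).shatterer
  set 𝒮₁ := (memberSubfamily a 𝒜).shatterer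
  have ha : ∀ s ∈ 𝒮₀ ∪ 𝒮₁, a ∉ s := by
    simp only [𝒮₀, 𝒮₁, mem_union, mem_shatterer]
    rintro s (hs | hs)
    exacts [hs.notMem_of_nonMemberSubfamily, hs.notMem_of_memberSubfamily]
  have hcard : #((𝒮₀ ∩ 𝒮₁).image (insert a)) = #(𝒮₀ ∩ 𝒮₁) :=
    card_image_of_injOn <| insert_erase_invOn.2.injOn.mono fun s hs ↦
      ha s (mem_union_left _ (mem_inter.1 hs).1)
  have hdisj : Disjoint (𝒮₀ ∪ 𝒮₁) ((𝒮₀ ∩ 𝒮₁).image (insert a)) := by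
    rw [disjoint_right]
    rintro _ hs hs'
    obtain ⟨s, -, rfl⟩ := mem_image.1 hs
    exact ha _ hs' (mem_insert_self a s)
  have hsub : 𝒮₀ ∪ 𝒮₁ ∪ (𝒮₀ ∩ 𝒮₁).image (insert a) ⊆ 𝒜.shatterer := by
    simp only [𝒮₀, 𝒮₁, subset_iff, mem_union, mem_inter, mem_image, mem_shatterer]
    rintro _ ((hs | hs) | ⟨s, ⟨h₀, h₁⟩, rfl⟩)
    exacts [hs.of_nonMemberSubfamily, hs.of_memberSubfamily,
      h₁.insert_of_memberSubfamily_of_nonMemberSubfamily h₀]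
  calc #𝒮₀ + #𝒮₁ = #(𝒮₀ ∪ 𝒮₁) + #((𝒮₀ ∩ 𝒮₁).image (insert a)) := by
        rw [hcard, card_union_add_card_inter]
    _ = #(𝒮₀ ∪ 𝒮₁ ∪ (𝒮₀ ∩ 𝒮₁).image (insert a)) := (card_union_of_disjoint hdisj).symm
    _ ≤ #𝒜.shatterer := card_le_card hsub

end Finset

lemma shatters_iff_finset_shatters {n : ℕ} (𝓕 : Finset (Finset (Fin n))) (S : Finset (Fin n)) :
    Shatters 𝓕 S ↔ 𝓕.Shatters S := by
  simp only [Shatters, Finset.Shatters, Finset.inter_comm S]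

lemma Sh_eq_shatterer {n : ℕ} (𝓕 : Finset (Finset (Fin n))) : Sh 𝓕 = 𝓕.shatterer := by
  ext S
  simp [Sh, shatters_iff_finset_shatters]

/-- For the standard subdivision `𝓕₀, 𝓕₁` of `𝓕` with respect to `i`, we have
`|Sh(𝓕)| ≥ |Sh(𝓕₀)| + |Sh(𝓕₁)|`. -/
theorem Sh_card_standard_subdivision (n : ℕ) (𝓕 : Finset (Finset (Fin n))) (i : Fin n) :
    (Sh (𝓕.filter fun F => i ∉ F)).card +
      (Sh ((𝓕.filter fun F => i ∈ F).image fun F => F.erase i)).card ≤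
      (Sh 𝓕).card := by
  simp only [Sh_eq_shatterer]
  exact Finset.card_shatterer_nonMemberSubfamily_add_card_shatterer_memberSubfamily_le i 𝓕
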